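/- arXiv:1502.02634 — 6 statements merged into one kernel-verified Lean document; each statement's English description precedes it below -/
import Mathlib

section
/- Let ϱ(X) = Σ_{j=0}^k α_j X^j be a real polynomial of degree k with α_k = 1, satisfying ϱ(1) = 0 and ϱ'(1) > 0, and suppose ϱ has no complex root of modulus greater than 1. Let σ(X) = Σ_{j=0}^{k-1} β_j X^j be a real polynomial with σ(1) = ϱ'(1). Then for every real μ > 0, the polynomial P_μ(X) = ϱ(X) − μ σ(X) has a real root in the open interval (1, ∞). -/
open Polynomial Filter Set

namespace Polynomial

theorem Monic.zero_lt_degree_of_eval_neg {P : ℝ[X]} (hP : P.Monic) {a : ℝ} (ha : P.eval a < 0) :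
    0 < P.degree := by
  refine natDegree_pos_iff_degree_pos.mp (Nat.pos_of_ne_zero fun h => ?_)
  rw [hP.natDegree_eq_zero.mp h, eval_one] at ha
  exact absurd ha zero_le_one.not_gt

theorem Monic.exists_eval_eq_zero_gt_of_eval_neg {P : ℝ[X]} (hP : P.Monic) {a : ℝ}
    (ha : P.eval a < 0) : ∃ x, a < x ∧ P.eval x = 0 := by
  have htop : Tendsto (fun x => P.eval x) atTop atTop :=
    P.tendsto_atTop_of_leadingCoeff_nonneg (hP.zero_lt_degree_of_eval_neg ha)
      (by rw [hP.leadingCoeff]; exact zero_le_one)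
  exact intermediate_value_Ioi P.continuous.continuousOn htop ha

theorem Monic.sub_C_mul_of_degree_lt {R : Type*} [Ring R] {ρ σ : R[X]} (hρ : ρ.Monic)
    (hσ : σ.degree < ρ.degree) (μ : R) : (ρ - C μ * σ).Monic :=
  hρ.sub_of_left (by rw [← smul_eq_C_mul]; exact (degree_smul_le μ σ).trans_lt hσ)

end Polynomial

theorem stmt0_general (k : ℕ) (ρ σ : Polynomial ℝ)
    (hmon : ρ.Monic) (hdeg : ρ.natDegree = k)
    (hρ1 : ρ.eval 1 = 0) (hρ'1 : 0 < ρ.derivative.eval 1)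
    (hσdeg : σ.degree < k) (hσ1 : σ.eval 1 = ρ.derivative.eval 1) :
    ∀ μ : ℝ, 0 < μ → ∃ x : ℝ, 1 < x ∧ (ρ - Polynomial.C μ * σ).eval x = 0 := by
  intro μ hμ
  have hσρ : σ.degree < ρ.degree := by rwa [degree_eq_natDegree hmon.ne_zero, hdeg]
  have heval : (ρ - C μ * σ).eval 1 < 0 := by
    rw [eval_sub, eval_mul, eval_C, hρ1, hσ1, zero_sub, neg_lt_zero]
    exact mul_pos hμ hρ'1
  exact (hmon.sub_C_mul_of_degree_lt hσρ μ).exists_eval_eq_zero_gt_of_eval_neg heval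

/-- if ϱ is a monic real polynomial of degree k with ϱ(1)=0, ϱ'(1)>0, all
complex roots in the closed unit disk, and σ has degree < k with σ(1)=ϱ'(1), then for
every μ>0 the polynomial ϱ - μσ has a real root in (1,∞). -/
theorem stmt0 (k : ℕ) (hk : 1 ≤ k) (ρ σ : Polynomial ℝ)
    (hmon : ρ.Monic) (hdeg : ρ.natDegree = k)
    (hρ1 : ρ.eval 1 = 0) (hρ'1 : 0 < ρ.derivative.eval 1)
    (hroots : ∀ z : ℂ, (ρ.map (algebraMap ℝ ℂ)).IsRoot z → ‖z‖ ≤ 1)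
    (hσdeg : σ.degree < k) (hσ1 : σ.eval 1 = ρ.derivative.eval 1) :
    ∀ μ : ℝ, 0 < μ → ∃ x : ℝ, 1 < x ∧ (ρ - Polynomial.C μ * σ).eval x = 0 :=
  stmt0_general k ρ σ hmon hdeg hρ1 hρ'1 hσdeg hσ1
end

section
/- Let 𝒜(z) = Σ_{ℓ=-r}^p a_ℓ z^ℓ with real coefficients, 𝒜(1)=0, 𝒜'(1)=a. For any ε ∈ (0,π/4], the map ω ↦ Im 𝒜(cos ε + iω) on [−sin ε, sin ε] has derivative Re 𝒜'(cos ε + iω). Consequently, if ε is small enough and a > 0 (resp. a < 0), this map is strictly increasing (resp. strictly decreasing) on [−sin ε, sin ε], and hence 𝒜(cos ε + iω) ∉ ℝ for every ω with 0 < |ω| ≤ sin ε. -/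
/-!
On the vertical line `Re z = c ≠ 0` the Laurent polynomial `𝒜` is holomorphic, and moving
along the line multiplies the complex derivative by `I`, so the derivative of `ω ↦ Im 𝒜(c + iω)`
is `Re 𝒜'(c + iω)`. The chord `{cos ε + iω : |ω| ≤ sin ε}` of the unit circle lies in the
closed disc of radius `ε` about `1`, and `Re 𝒜'` is continuous with `Re 𝒜'(1) = a ≠ 0`; so for
small `ε` the derivative has the sign of `a` along the whole chord. The map is then strictly
monotone, and since it vanishes at `ω = 0` (real coefficients at a real point) it vanishes
nowhere else on the chord.
-/

open Complex Real Set Filter Topology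

theorem hasDerivAt_sum_zpow {𝕜 : Type*} [NontriviallyNormedField 𝕜] (S : Finset ℤ) (c : ℤ → 𝕜)
    {z : 𝕜} (hz : z ≠ 0) :
    HasDerivAt (fun z => ∑ ℓ ∈ S, c ℓ * z ^ ℓ) (∑ ℓ ∈ S, (ℓ : 𝕜) * c ℓ * z ^ (ℓ - 1)) z := by
  refine HasDerivAt.fun_sum fun ℓ _ => ?_
  simpa [mul_left_comm, mul_assoc] using (hasDerivAt_zpow ℓ z (.inl hz)).const_mul (c ℓ)

theorem HasDerivAt.im_comp_vertical {F : ℂ → ℂ} {F' : ℂ} {c t : ℝ}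
    (h : HasDerivAt F F' (c + t * I)) :
    HasDerivAt (fun s : ℝ => (F (c + s * I)).im) F'.re t := by
  have hline : HasDerivAt (fun s : ℝ => (c : ℂ) + s * I) I t := by
    simpa using ((hasDerivAt_id t).ofReal_comp.mul_const I).const_add (c : ℂ)
  have him : HasDerivAt (fun s : ℝ => (F (c + s * I)).im) (imCLM (F' * I)) t :=
    imCLM.hasFDerivAt.comp_hasDerivAt t (h.comp t hline)
  simpa using him

theorem hasDerivAt_im_sum_zpow_vertical (S : Finset ℤ) (a : ℤ → ℝ) {c : ℝ} (hc : c ≠ 0)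
    (ω : ℝ) :
    HasDerivAt (fun ω : ℝ => (∑ ℓ ∈ S, (a ℓ : ℂ) * ((c : ℂ) + ω * I) ^ ℓ).im)
      (∑ ℓ ∈ S, (ℓ : ℂ) * (a ℓ : ℂ) * ((c : ℂ) + ω * I) ^ (ℓ - 1)).re ω := by
  have hz : (c : ℂ) + ω * I ≠ 0 := fun h => hc (by simpa using congrArg re h)
  exact (hasDerivAt_sum_zpow S _ hz).im_comp_vertical

theorem im_sum_ofReal_mul_zpow (S : Finset ℤ) (a : ℤ → ℝ) (x : ℝ) :
    (∑ ℓ ∈ S, (a ℓ : ℂ) * (x : ℂ) ^ ℓ).im = 0 := by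
  simp [← ofReal_zpow, ← ofReal_mul]

theorem eventually_nhds_one_mul_re_sum_zpow_pos (S : Finset ℤ) (a : ℤ → ℝ)
    (h : ∑ ℓ ∈ S, (ℓ : ℝ) * a ℓ ≠ 0) :
    ∀ᶠ z in 𝓝 (1 : ℂ),
      0 < (∑ ℓ ∈ S, (ℓ : ℝ) * a ℓ) * (∑ ℓ ∈ S, (ℓ : ℂ) * (a ℓ : ℂ) * z ^ (ℓ - 1)).re := by
  have hcont : ContinuousAt
      (fun z : ℂ => (∑ ℓ ∈ S, (ℓ : ℝ) * a ℓ) * (∑ ℓ ∈ S, (ℓ : ℂ) * (a ℓ : ℂ) * z ^ (ℓ - 1)).re)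
      1 := by
    fun_prop (disch := simp)
  refine hcont.eventually (lt_mem_nhds ?_)
  simpa using mul_self_pos.mpr h

theorem dist_cos_add_mul_I_one_le {ε ω : ℝ} (h : |ω| ≤ Real.sin ε) :
    dist ((Real.cos ε : ℂ) + ω * I) 1 ≤ |ε| := by
  rw [Complex.dist_eq, ← abs_norm, ← sq_le_sq, Complex.sq_norm, normSq_apply]
  have hω : ω ^ 2 ≤ Real.sin ε ^ 2 := by
    rw [← sq_abs ω]
    exact pow_le_pow_left₀ (abs_nonneg ω) h 2
  simp only [sub_re, add_re, ofReal_re, mul_re, I_re, mul_zero, ofReal_im, I_im, mul_one,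
    sub_self, add_zero, one_re, sub_im, add_im, mul_im, zero_add, one_im, sub_zero]
  nlinarith [Real.sin_sq_add_cos_sq ε, one_sub_sq_div_two_le_cos (x := ε), sq_abs ε]

theorem strictMonoOn_Icc_of_hasDerivAt_pos {f f' : ℝ → ℝ} {a b : ℝ}
    (hf : ∀ x, HasDerivAt f (f' x) x) (hf' : ∀ x ∈ Icc a b, 0 < f' x) :
    StrictMonoOn f (Icc a b) :=
  strictMonoOn_of_hasDerivWithinAt_pos (convex_Icc a b)
    (fun x _ => (hf x).continuousAt.continuousWithinAt) (fun x _ => (hf x).hasDerivWithinAt)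
    fun x hx => hf' x (interior_subset hx)

theorem strictAntiOn_Icc_of_hasDerivAt_neg {f f' : ℝ → ℝ} {a b : ℝ}
    (hf : ∀ x, HasDerivAt f (f' x) x) (hf' : ∀ x ∈ Icc a b, f' x < 0) :
    StrictAntiOn f (Icc a b) :=
  strictAntiOn_of_hasDerivWithinAt_neg (convex_Icc a b)
    (fun x _ => (hf x).continuousAt.continuousWithinAt) (fun x _ => (hf x).hasDerivWithinAt)
    fun x hx => hf' x (interior_subset hx)

theorem stmt4_general (r p : ℕ) (a : ℤ → ℝ) (aa : ℝ)
    (hA'1 : ∑ ℓ ∈ Finset.Icc (-(r : ℤ)) (p : ℤ), (ℓ : ℝ) * a ℓ = aa)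
    (haa : aa ≠ 0) :
    (∀ ε : ℝ, ε ∈ Set.Ioc 0 (Real.pi / 4) → ∀ ω : ℝ, ω ∈ Set.Icc (-Real.sin ε) (Real.sin ε) →
      HasDerivAt
        (fun ω : ℝ => (∑ ℓ ∈ Finset.Icc (-(r : ℤ)) (p : ℤ),
          (a ℓ : ℂ) * ((Real.cos ε : ℂ) + ω * Complex.I) ^ ℓ).im)
        (∑ ℓ ∈ Finset.Icc (-(r : ℤ)) (p : ℤ),
          (ℓ : ℂ) * (a ℓ : ℂ) * ((Real.cos ε : ℂ) + ω * Complex.I) ^ (ℓ - 1)).re ω) ∧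
    (∃ ε₀ > 0, ∀ ε : ℝ, 0 < ε → ε ≤ min ε₀ (Real.pi / 4) →
      ((0 < aa → StrictMonoOn
          (fun ω : ℝ => (∑ ℓ ∈ Finset.Icc (-(r : ℤ)) (p : ℤ),
            (a ℓ : ℂ) * ((Real.cos ε : ℂ) + ω * Complex.I) ^ ℓ).im)
          (Set.Icc (-Real.sin ε) (Real.sin ε))) ∧
       (aa < 0 → StrictAntiOn
          (fun ω : ℝ => (∑ ℓ ∈ Finset.Icc (-(r : ℤ)) (p : ℤ),
            (a ℓ : ℂ) * ((Real.cos ε : ℂ) + ω * Complex.I) ^ ℓ).im)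
          (Set.Icc (-Real.sin ε) (Real.sin ε))) ∧
       (∀ ω : ℝ, 0 < |ω| → |ω| ≤ Real.sin ε →
          (∑ ℓ ∈ Finset.Icc (-(r : ℤ)) (p : ℤ),
            (a ℓ : ℂ) * ((Real.cos ε : ℂ) + ω * Complex.I) ^ ℓ).im ≠ 0))) := by
  set S := Finset.Icc (-(r : ℤ)) (p : ℤ)
  have hcos : ∀ ε ∈ Ioc 0 (π / 4), 0 < Real.cos ε := fun ε hε =>
    cos_pos_of_mem_Ioo ⟨by linarith [hε.1, pi_pos], by linarith [hε.2, pi_pos]⟩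
  refine ⟨fun ε hε ω _ => hasDerivAt_im_sum_zpow_vertical S a (hcos ε hε).ne' ω, ?_⟩
  obtain ⟨δ, hδ, hsign⟩ := Metric.eventually_nhds_iff.mp
    (eventually_nhds_one_mul_re_sum_zpow_pos S a (hA'1 ▸ haa))
  refine ⟨δ / 2, half_pos hδ, fun ε hε hεδ => ?_⟩
  have hεπ : ε ∈ Ioc 0 (π / 4) := ⟨hε, hεδ.trans (min_le_right _ _)⟩
  have hderiv := hasDerivAt_im_sum_zpow_vertical S a (hcos ε hεπ).ne'
  have hchord : ∀ ω ∈ Icc (-Real.sin ε) (Real.sin ε), 0 < aa *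
      (∑ ℓ ∈ S, (ℓ : ℂ) * (a ℓ : ℂ) * ((Real.cos ε : ℂ) + ω * I) ^ (ℓ - 1)).re := by
    intro ω hω
    refine hA'1 ▸ hsign ((dist_cos_add_mul_I_one_le (abs_le.mpr hω)).trans_lt ?_)
    linarith [abs_of_pos hε, min_le_left (δ / 2) (π / 4)]
  have hmono := fun h : 0 < aa => strictMonoOn_Icc_of_hasDerivAt_pos hderiv
    fun ω hω => pos_of_mul_pos_right (hchord ω hω) h.le
  have hanti := fun h : aa < 0 => strictAntiOn_Icc_of_hasDerivAt_neg hderiv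
    fun ω hω => neg_of_mul_pos_right (hchord ω hω) h.le
  refine ⟨hmono, hanti, fun ω hω₀ hω => ?_⟩
  have hinj := haa.lt_or_gt.elim (fun h => (hanti h).injOn) (fun h => (hmono h).injOn)
  have hsin : 0 ≤ Real.sin ε := (abs_nonneg ω).trans hω
  have hne := hinj.ne (abs_le.mp hω) ⟨neg_nonpos.mpr hsin, hsin⟩ (abs_pos.mp hω₀)
  simpa only [ofReal_zero, zero_mul, add_zero, im_sum_ofReal_mul_zpow] using hne

/-- on the vertical chord, the derivative of ω ↦ Im 𝒜(cos ε + iω) is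
Re 𝒜'(cos ε + iω); for small ε this map is strictly monotone (increasing if a > 0,
decreasing if a < 0), hence 𝒜(cos ε + iω) is non-real for 0 < |ω| ≤ sin ε. -/
theorem stmt4 (r p : ℕ) (a : ℤ → ℝ) (aa : ℝ)
    (hA1 : ∑ ℓ ∈ Finset.Icc (-(r : ℤ)) (p : ℤ), a ℓ = 0)
    (hA'1 : ∑ ℓ ∈ Finset.Icc (-(r : ℤ)) (p : ℤ), (ℓ : ℝ) * a ℓ = aa)
    (haa : aa ≠ 0) :
    (∀ ε : ℝ, ε ∈ Set.Ioc 0 (Real.pi / 4) → ∀ ω : ℝ, ω ∈ Set.Icc (-Real.sin ε) (Real.sin ε) →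
      HasDerivAt
        (fun ω : ℝ => (∑ ℓ ∈ Finset.Icc (-(r : ℤ)) (p : ℤ),
          (a ℓ : ℂ) * ((Real.cos ε : ℂ) + ω * Complex.I) ^ ℓ).im)
        (∑ ℓ ∈ Finset.Icc (-(r : ℤ)) (p : ℤ),
          (ℓ : ℂ) * (a ℓ : ℂ) * ((Real.cos ε : ℂ) + ω * Complex.I) ^ (ℓ - 1)).re ω) ∧
    (∃ ε₀ > 0, ∀ ε : ℝ, 0 < ε → ε ≤ min ε₀ (Real.pi / 4) →
      ((0 < aa → StrictMonoOn
          (fun ω : ℝ => (∑ ℓ ∈ Finset.Icc (-(r : ℤ)) (p : ℤ),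
            (a ℓ : ℂ) * ((Real.cos ε : ℂ) + ω * Complex.I) ^ ℓ).im)
          (Set.Icc (-Real.sin ε) (Real.sin ε))) ∧
       (aa < 0 → StrictAntiOn
          (fun ω : ℝ => (∑ ℓ ∈ Finset.Icc (-(r : ℤ)) (p : ℤ),
            (a ℓ : ℂ) * ((Real.cos ε : ℂ) + ω * Complex.I) ^ ℓ).im)
          (Set.Icc (-Real.sin ε) (Real.sin ε))) ∧
       (∀ ω : ℝ, 0 < |ω| → |ω| ≤ Real.sin ε →
          (∑ ℓ ∈ Finset.Icc (-(r : ℤ)) (p : ℤ),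
            (a ℓ : ℂ) * ((Real.cos ε : ℂ) + ω * Complex.I) ^ ℓ).im ≠ 0))) :=
  stmt4_general r p a aa hA'1 haa
end

section
/- Under the hypotheses that the polynomial equation Σ_{ℓ=-r}^p a_ℓ z^{ℓ+r} = 0 has exactly r − 1 roots (with multiplicity) in the punctured open unit disk, with r ≥ 1: the only real number u for which there exists a sequence (v_j)_{j∈ℕ} satisfying (i) v_0 = … = v_{r-1} = −u, (ii) Σ_{ℓ=-r}^p a_ℓ v_{j+ℓ+r} = 0 for all j ≥ 0, and (iii) v_j → 0 as j → ∞, is u = 0, and then v is the zero sequence. -/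
/-!
Let `S` be the left shift on sequences, so that the recurrence reads `P(S) v = 0` for the
characteristic polynomial `P`. Since `P(0) = a₋ᵣ ≠ 0`, splitting `P` over `ℂ` gives
`P = c · P_out · P_in`, where `P_in` collects the `r - 1` roots in the open unit disk and `P_out`
the roots of modulus `≥ 1`. The sequence `y = P_in(S) v` still tends to zero and is killed by
every factor `S - w` of `P_out`; a solution of `y_{j+1} = w y_j` with `|w| ≥ 1` has
`|y_j| ≥ |y_0|`, so it tends to zero only if it vanishes. Hence `P_in(S) v = 0`, a monic
recurrence of order `r - 1`. Its first instance only involves `v₀ = ⋯ = v_{r-1} = -u` and reads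
`-u · P_in(1) = 0`, where `P_in(1) ≠ 0`; so `u = 0`, and then all initial values vanish.
-/

open Polynomial Filter Topology

def seqShift (R : Type*) [CommSemiring R] : (ℕ → R) →ₗ[R] (ℕ → R) :=
  LinearMap.funLeft R R Nat.succ

section CommSemiring

variable {R : Type*} [CommSemiring R]

theorem seqShift_pow_apply (i : ℕ) (x : ℕ → R) (j : ℕ) : (seqShift R ^ i) x j = x (j + i) := by
  induction i generalizing x with
  | zero => rfl
  | succ i ih => rw [pow_succ, Module.End.mul_apply, ih]; rfl

theorem aeval_seqShift_apply (q : R[X]) (x : ℕ → R) (j : ℕ) :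
    aeval (seqShift R) q x j = ∑ i ∈ Finset.range (q.natDegree + 1), q.coeff i * x (j + i) := by
  simp [aeval_eq_sum_range, seqShift_pow_apply]

theorem aeval_seqShift_sum_C_mul_X_pow {ι : Type*} (s : Finset ι) (c : ι → R) (e : ι → ℕ)
    (x : ℕ → R) (j : ℕ) :
    aeval (seqShift R) (∑ ℓ ∈ s, C (c ℓ) * X ^ e ℓ) x j = ∑ ℓ ∈ s, c ℓ * x (j + e ℓ) := by
  simp [seqShift_pow_apply]

theorem aeval_seqShift_apply_zero_of_forall_le {q : R[X]} {x : ℕ → R} {c : R}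
    (hx : ∀ i ≤ q.natDegree, x i = c) : aeval (seqShift R) q x 0 = q.eval 1 * c := by
  rw [aeval_seqShift_apply, eval_eq_sum_range, Finset.sum_mul]
  refine Finset.sum_congr rfl fun i hi => ?_
  rw [zero_add, hx i (Nat.lt_succ_iff.mp (Finset.mem_range.mp hi)), one_pow, mul_one]

end CommSemiring

section CommRing

variable {R : Type*} [CommRing R]

theorem eq_zero_of_aeval_seqShift_eq_zero_of_monic {q : R[X]} (hq : q.Monic) {x : ℕ → R}
    (hqx : aeval (seqShift R) q x = 0) (hx : ∀ j < q.natDegree, x j = 0) : x = 0 := by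
  funext j
  induction j using Nat.strong_induction_on with
  | _ j ih =>
  rcases lt_or_ge j q.natDegree with hj | hj
  · exact hx j hj
  have h := congrFun hqx (j - q.natDegree)
  rw [aeval_seqShift_apply, Finset.sum_range_succ, hq.coeff_natDegree, one_mul,
    Nat.sub_add_cancel hj, Finset.sum_eq_zero fun i hi => ?_, zero_add] at h
  · exact h
  · rw [ih _ (by simp at hi; omega), Pi.zero_apply, mul_zero]

theorem eq_zero_of_aeval_seqShift_eq_zero_of_forall_le_eq [IsDomain R] {q : R[X]} (hq : q.Monic)
    (hq1 : q.eval 1 ≠ 0) {x : ℕ → R} (hqx : aeval (seqShift R) q x = 0) {c : R}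
    (hx : ∀ i ≤ q.natDegree, x i = c) : c = 0 ∧ x = 0 := by
  have hc : c = 0 := by
    have h := congrFun hqx 0
    rwa [aeval_seqShift_apply_zero_of_forall_le hx, Pi.zero_apply, mul_eq_zero,
      or_iff_right hq1] at h
  exact ⟨hc, eq_zero_of_aeval_seqShift_eq_zero_of_monic hq hqx fun j hj => hc ▸ hx j hj.le⟩

end CommRing

section NormedField

variable {𝕜 : Type*} [NormedField 𝕜]

theorem tendsto_aeval_seqShift (q : 𝕜[X]) {x : ℕ → 𝕜} (hx : Tendsto x atTop (𝓝 0)) :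
    Tendsto (aeval (seqShift 𝕜) q x) atTop (𝓝 0) := by
  simp_rw [funext (aeval_seqShift_apply q x)]
  simpa using tendsto_finsetSum _ fun i _ =>
    (hx.comp (tendsto_add_atTop_nat i)).const_mul (q.coeff i)

theorem eq_zero_of_seqShift_eq_smul {w : 𝕜} (hw : 1 ≤ ‖w‖) {y : ℕ → 𝕜}
    (hy : seqShift 𝕜 y = w • y) (hlim : Tendsto y atTop (𝓝 0)) : y = 0 := by
  have hpow : ∀ j, y j = w ^ j * y 0 := by
    intro j
    induction j with
    | zero => simp
    | succ j ih => rw [show y (j + 1) = w * y j from congrFun hy j, ih, pow_succ', mul_assoc]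
  have hy0 : y 0 = 0 := by
    refine norm_le_zero_iff.mp (ge_of_tendsto' (tendsto_zero_iff_norm_tendsto_zero.mp hlim)
      fun j => ?_)
    rw [hpow j, norm_mul, norm_pow]
    exact le_mul_of_one_le_left (norm_nonneg _) (one_le_pow₀ hw)
  funext j
  rw [hpow j, hy0, mul_zero, Pi.zero_apply]

theorem eq_zero_of_aeval_seqShift_prod_eq_zero {s : Multiset 𝕜} (hs : ∀ w ∈ s, 1 ≤ ‖w‖)
    {y : ℕ → 𝕜} (hy : aeval (seqShift 𝕜) (s.map fun w => X - C w).prod y = 0)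
    (hlim : Tendsto y atTop (𝓝 0)) : y = 0 := by
  induction s using Multiset.induction_on with
  | empty => simpa using hy
  | cons w s ih =>
    rw [Multiset.map_cons, Multiset.prod_cons, map_mul, Module.End.mul_apply] at hy
    refine ih (fun w' hw' => hs w' (Multiset.mem_cons_of_mem hw')) ?_
    refine eq_zero_of_seqShift_eq_smul (hs w (Multiset.mem_cons_self w s)) ?_
      (tendsto_aeval_seqShift _ hlim)
    simpa [sub_eq_zero] using hy

theorem aeval_seqShift_filter_roots_prod_eq_zero [IsAlgClosed 𝕜] {P : 𝕜[X]} (hP : P ≠ 0)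
    (p : 𝕜 → Prop) [DecidablePred p] (hroots : ∀ z ∈ P.roots, ¬p z → 1 ≤ ‖z‖) {x : ℕ → 𝕜}
    (hPx : aeval (seqShift 𝕜) P x = 0) (hlim : Tendsto x atTop (𝓝 0)) :
    aeval (seqShift 𝕜) ((P.roots.filter p).map fun w => X - C w).prod x = 0 := by
  have hfactor : P = C P.leadingCoeff * (((P.roots.filter (¬p ·)).map fun w => X - C w).prod *
      ((P.roots.filter p).map fun w => X - C w).prod) := by
    conv_lhs => rw [← C_leadingCoeff_mul_prod_multiset_X_sub_C
      (IsAlgClosed.card_roots_eq_natDegree (p := P)), ← Multiset.filter_add_not p P.roots]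
    rw [Multiset.map_add, Multiset.prod_add, mul_comm (Multiset.prod _)]
  refine eq_zero_of_aeval_seqShift_prod_eq_zero (s := P.roots.filter (¬p ·))
    (fun w hw => hroots w (Multiset.mem_filter.mp hw).1 (Multiset.mem_filter.mp hw).2) ?_
    (tendsto_aeval_seqShift _ hlim)
  rw [hfactor, map_mul, map_mul, aeval_C, Module.End.mul_apply, Module.End.mul_apply,
    Module.algebraMap_end_apply, smul_eq_zero] at hPx
  exact hPx.resolve_left (leadingCoeff_ne_zero.mpr hP)

end NormedField

theorem stmt8_general (r p : ℕ) (hr : 1 ≤ r) (a : ℤ → ℝ)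
    (har : a (-(r : ℤ)) ≠ 0)
    (hcount : Multiset.card
      ((∑ ℓ ∈ Finset.Icc (-(r : ℤ)) (p : ℤ),
          Polynomial.C (a ℓ : ℂ) * Polynomial.X ^ (ℓ + r).toNat).roots.filter
        (fun z => ‖z‖ < 1 ∧ z ≠ 0)) = r - 1) :
    ∀ (u : ℝ) (v : ℕ → ℝ),
      (∀ j : ℕ, j < r → v j = -u) →
      (∀ j : ℕ, ∑ ℓ ∈ Finset.Icc (-(r : ℤ)) (p : ℤ), a ℓ * v (j + (ℓ + r).toNat) = 0) →
      Filter.Tendsto v Filter.atTop (nhds 0) →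
      u = 0 ∧ ∀ j : ℕ, v j = 0 := by
  intro u v hinit hrec hlim
  set P : ℂ[X] := ∑ ℓ ∈ Finset.Icc (-(r : ℤ)) (p : ℤ), C (a ℓ : ℂ) * X ^ (ℓ + r).toNat
  set small := P.roots.filter fun z => ‖z‖ < 1 ∧ z ≠ 0
  set q := (small.map fun w => X - C w).prod
  have hP0 : P.eval 0 ≠ 0 := by
    rw [eval_finsetSum, Finset.sum_eq_single (-(r : ℤ)) (fun ℓ hℓ hne => ?_) (by simp)]
    · simpa using har
    · have : (ℓ + r).toNat ≠ 0 := by simp at hℓ; omega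
      simp [this]
  have hP : P ≠ 0 := fun h => hP0 (by rw [h, eval_zero])
  have hqv : aeval (seqShift ℂ) q (fun j => (v j : ℂ)) = 0 :=
    aeval_seqShift_filter_roots_prod_eq_zero hP _
      (fun z hz hsmall => not_lt.mp fun hz1 =>
        hsmall ⟨hz1, fun h => hP0 (h ▸ ((mem_roots hP).mp hz).eq_zero)⟩)
      (funext fun j => by rw [aeval_seqShift_sum_C_mul_X_pow, Pi.zero_apply]; exact_mod_cast hrec j)
      ((Complex.continuous_ofReal.tendsto' 0 0 Complex.ofReal_zero).comp hlim)
  have hq : q.Monic := monic_multiset_prod_of_monic _ _ fun w _ => monic_X_sub_C w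
  have hq1 : q.eval 1 ≠ 0 := fun h => by
    have h1 : (1 : ℂ) ∈ small := by
      rw [← roots_multiset_prod_X_sub_C small]; exact (mem_roots hq.ne_zero).mpr h
    simp [small] at h1
  have hqdeg : q.natDegree = r - 1 := by rw [natDegree_multiset_prod_X_sub_C_eq_card, hcount]
  obtain ⟨hu, hv⟩ := eq_zero_of_aeval_seqShift_eq_zero_of_forall_le_eq hq hq1 hqv
    (c := ((-u : ℝ) : ℂ)) fun i hi => by simp [hinit i (by omega)]
  exact ⟨by simpa using hu, fun j => by simpa using congrFun hv j⟩

/-- if the characteristic polynomial has exactly r - 1 roots (with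
multiplicity) in the punctured open unit disk, then the only boundary layer profile
is the trivial one: u = 0 and v ≡ 0. -/
theorem stmt8 (r p : ℕ) (hr : 1 ≤ r) (a : ℤ → ℝ)
    (har : a (-(r : ℤ)) ≠ 0) (hap : a p ≠ 0)
    (hcount : Multiset.card
      ((∑ ℓ ∈ Finset.Icc (-(r : ℤ)) (p : ℤ),
          Polynomial.C (a ℓ : ℂ) * Polynomial.X ^ (ℓ + r).toNat).roots.filter
        (fun z => ‖z‖ < 1 ∧ z ≠ 0)) = r - 1) :
    ∀ (u : ℝ) (v : ℕ → ℝ),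
      (∀ j : ℕ, j < r → v j = -u) →
      (∀ j : ℕ, ∑ ℓ ∈ Finset.Icc (-(r : ℤ)) (p : ℤ), a ℓ * v (j + (ℓ + r).toNat) = 0) →
      Filter.Tendsto v Filter.atTop (nhds 0) →
      u = 0 ∧ ∀ j : ℕ, v j = 0 :=
  stmt8_general r p hr a har hcount
end

section
/- Let u_0 ∈ H^1(ℝ) vanish on (−∞,0], let a > 0, λ > 0, Δt ∈ (0,1], Δx = λ^{-1}Δt (so that λ = Δt/Δx), and for j ∈ {0,…,r−1} and n ≥ 0 set η_{j,n} := (1/Δx) ∫_{jΔx}^{(j+1)Δx} u_0(x − a nΔt) dx. Then η_{j,n} = 0 whenever n ≥ r/(aλ), and there is a constant C depending only on r, a, λ such that Σ_{n≥0} Σ_{j=0}^{r-1} Δt |η_{j,n}|^2 ≤ C Δt^2 ‖u_0'‖_{L²(ℝ⁺)}^2. -/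
open MeasureTheory Set

/-- incoming case boundary errors: with u₀ ∈ H¹ vanishing on (-∞,0],
a > 0 and Δx = τ a Δt, the boundary cell averages η_{j,n} vanish for n ≥ r/(aλ) = rτ
and satisfy Σ_{n,j} Δt |η_{j,n}|² ≤ C Δt² ‖u₀'‖²_{L²(ℝ⁺)}, C depending only on r, a, τ. -/
theorem stmt13 (r : ℕ) (a τ : ℝ) (ha : 0 < a) (hτ : 0 < τ) :
    ∃ C > 0, ∀ (u₀ g : ℝ → ℝ),
      (∀ x : ℝ, x ≤ 0 → u₀ x = 0) →
      (∀ x : ℝ, HasDerivAt u₀ (g x) x) →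
      MeasureTheory.MemLp g 2 MeasureTheory.volume →
      ∀ Δt : ℝ, Δt ∈ Set.Ioc (0 : ℝ) 1 →
        (∀ j : ℕ, j < r → ∀ n : ℕ, (r : ℝ) * τ ≤ (n : ℝ) →
          (1 / (τ * a * Δt)) *
            ∫ x in Set.Ioc ((j : ℝ) * (τ * a * Δt)) (((j : ℝ) + 1) * (τ * a * Δt)),
              u₀ (x - a * n * Δt) = 0) ∧
        ∑' n : ℕ, ∑ j ∈ Finset.range r,
          Δt * ((1 / (τ * a * Δt)) *
            ∫ x in Set.Ioc ((j : ℝ) * (τ * a * Δt)) (((j : ℝ) + 1) * (τ * a * Δt)),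
              u₀ (x - a * n * Δt)) ^ 2
          ≤ C * Δt ^ 2 * ∫ x in Set.Ioi (0 : ℝ), (g x) ^ 2 := by
  classical
  set N : ℕ := Nat.ceil ((r : ℝ) * τ) with hNdef
  refine ⟨(N : ℝ) * (r : ℝ) ^ 2 * τ * a + 1, by positivity, ?_⟩
  intro u₀ g hu0 hderiv hg Δt hΔt
  obtain ⟨hΔt0, hΔt1⟩ := hΔt
  set Δx : ℝ := τ * a * Δt with hΔxdef
  have hΔx0 : 0 < Δx := by positivity
  have hu₀cont : Continuous u₀ :=
    continuous_iff_continuousAt.mpr fun x => (hderiv x).continuousAt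
  set K : ℝ := ∫ x in Set.Ioi (0:ℝ), (g x)^2 with hKdef
  have hgsq : Integrable (fun x => g x ^ 2) volume := hg.integrable_sq
  have hK0 : 0 ≤ K := setIntegral_nonneg measurableSet_Ioi (fun x _ => sq_nonneg _)
  -- FTC
  have hFTC : ∀ y : ℝ, 0 ≤ y → u₀ y = ∫ x in Set.Ioc 0 y, g x := by
    intro y hy
    haveI : Fact (volume (Ioc (0:ℝ) y) < ⊤) := ⟨measure_Ioc_lt_top⟩
    have hint : IntervalIntegrable g volume 0 y := by
      rw [intervalIntegrable_iff_integrableOn_Ioc_of_le hy]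
      exact (hg.restrict (Ioc 0 y)).integrable (by norm_num)
    have := intervalIntegral.integral_eq_sub_of_hasDerivAt
      (f := u₀) (f' := g) (fun x _ => hderiv x) hint
    rw [hu0 0 le_rfl, sub_zero] at this
    rw [← this, intervalIntegral.integral_of_le hy]
  -- Cauchy-Schwarz sup bound
  set B : ℝ := Real.sqrt ((r : ℝ) * Δx * K) with hBdef
  have hB0 : 0 ≤ B := Real.sqrt_nonneg _
  have hbound : ∀ y : ℝ, y ≤ (r : ℝ) * Δx → |u₀ y| ≤ B := by
    intro y hy
    rcases le_or_gt y 0 with hy0 | hy0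
    · rw [hu0 y hy0, abs_zero]; exact hB0
    haveI : Fact (volume (Ioc (0:ℝ) y) < ⊤) := ⟨measure_Ioc_lt_top⟩
    have hpq : (2:ℝ).HolderConjugate 2 := ⟨by norm_num, by norm_num, by norm_num⟩
    have h2 : ENNReal.ofReal (2:ℝ) = 2 := by simp
    have hf : MemLp (fun x => ‖g x‖) (ENNReal.ofReal (2:ℝ)) (volume.restrict (Ioc 0 y)) := by
      rw [h2]; exact (hg.restrict _).norm
    have hone : MemLp (fun _ : ℝ => (1:ℝ)) (ENNReal.ofReal (2:ℝ)) (volume.restrict (Ioc 0 y)) :=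
      memLp_const 1
    have h := integral_mul_le_Lp_mul_Lq_of_nonneg hpq
        (Filter.Eventually.of_forall fun x => norm_nonneg (g x))
        (Filter.Eventually.of_forall fun _ => zero_le_one) hf hone
    simp only [mul_one, Real.one_rpow] at h
    have e1 : (∫ x in Ioc (0:ℝ) y, ‖g x‖ ^ (2:ℝ)) = ∫ x in Ioc (0:ℝ) y, (g x)^2 := by
      refine integral_congr_ae (Filter.Eventually.of_forall fun x => ?_)
      simp [Real.rpow_natCast, sq_abs]
    have e2 : (∫ _x in Ioc (0:ℝ) y, (1:ℝ)) = y := by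
      rw [setIntegral_const, smul_eq_mul, mul_one, measureReal_def, Real.volume_Ioc,
        ENNReal.toReal_ofReal (by linarith), sub_zero]
    rw [e1, e2] at h
    have hIy0 : 0 ≤ ∫ x in Ioc (0:ℝ) y, (g x)^2 :=
      setIntegral_nonneg measurableSet_Ioc (fun x _ => sq_nonneg _)
    have hIle : (∫ x in Ioc (0:ℝ) y, (g x)^2) ≤ K := by
      refine setIntegral_mono_set hgsq.integrableOn
        (Filter.Eventually.of_forall fun x => sq_nonneg _) ?_
      exact HasSubset.Subset.eventuallyLE (Ioc_subset_Ioi_self)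
    calc |u₀ y| = ‖∫ x in Ioc (0:ℝ) y, g x‖ := by rw [hFTC y hy0.le]; rfl
      _ ≤ ∫ x in Ioc (0:ℝ) y, ‖g x‖ := norm_integral_le_integral_norm _
      _ ≤ (∫ x in Ioc (0:ℝ) y, (g x)^2) ^ ((1:ℝ)/2) * y ^ ((1:ℝ)/2) := h
      _ = Real.sqrt (∫ x in Ioc (0:ℝ) y, (g x)^2) * Real.sqrt y := by
          rw [Real.sqrt_eq_rpow, Real.sqrt_eq_rpow]
      _ = Real.sqrt ((∫ x in Ioc (0:ℝ) y, (g x)^2) * y) := (Real.sqrt_mul hIy0 y).symm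
      _ ≤ B := by
          apply Real.sqrt_le_sqrt
          calc (∫ x in Ioc (0:ℝ) y, (g x)^2) * y ≤ K * ((r:ℝ) * Δx) :=
                mul_le_mul hIle hy hy0.le hK0
            _ = (r:ℝ) * Δx * K := by ring
  -- vanishing part
  have hvanish : ∀ j : ℕ, j < r → ∀ n : ℕ, (r : ℝ) * τ ≤ (n : ℝ) →
      (1 / Δx) * ∫ x in Set.Ioc ((j : ℝ) * Δx) (((j : ℝ) + 1) * Δx),
        u₀ (x - a * n * Δt) = 0 := by
    intro j hj n hn
    rw [setIntegral_eq_zero_of_forall_eq_zero, mul_zero]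
    intro x hx
    apply hu0
    have hjr : (j : ℝ) + 1 ≤ (r : ℝ) := by exact_mod_cast hj
    have h1 : x ≤ ((j:ℝ) + 1) * Δx := hx.2
    have h2 : ((j:ℝ) + 1) * Δx ≤ (r:ℝ) * Δx := by nlinarith
    have h3 : (r:ℝ) * Δx ≤ a * n * Δt := by
      rw [hΔxdef]; nlinarith
    linarith
  refine ⟨hvanish, ?_⟩
  -- per-term bound
  have hterm : ∀ j : ℕ, j < r → ∀ n : ℕ,
      ((1 / Δx) * ∫ x in Set.Ioc ((j : ℝ) * Δx) (((j : ℝ) + 1) * Δx),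
        u₀ (x - a * n * Δt)) ^ 2 ≤ (r:ℝ) * Δx * K := by
    intro j hj n
    have hjr : (j : ℝ) + 1 ≤ (r : ℝ) := by exact_mod_cast hj
    have hmeas : AEStronglyMeasurable (fun x => u₀ (x - a * n * Δt))
        (volume.restrict (Ioc ((j:ℝ) * Δx) (((j:ℝ) + 1) * Δx))) :=
      ((hu₀cont.comp (continuous_id.sub continuous_const)).aestronglyMeasurable).restrict
    have hb : ∀ x ∈ Ioc ((j:ℝ) * Δx) (((j:ℝ) + 1) * Δx),
        ‖u₀ (x - a * n * Δt)‖ ≤ B := by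
      intro x hx
      apply hbound
      have hnn : 0 ≤ a * n * Δt := by positivity
      have h2 : ((j:ℝ) + 1) * Δx ≤ (r:ℝ) * Δx := by nlinarith
      linarith [hx.2]
    have hle := norm_setIntegral_le_of_norm_le_const (μ := volume)
      (measure_Ioc_lt_top) hb
    have hvol : (volume (Ioc ((j:ℝ) * Δx) (((j:ℝ) + 1) * Δx))).toReal = Δx := by
      rw [Real.volume_Ioc, ENNReal.toReal_ofReal (by nlinarith)]
      ring
    rw [measureReal_def, hvol] at hle
    have habs : |(1 / Δx) * ∫ x in Set.Ioc ((j : ℝ) * Δx) (((j : ℝ) + 1) * Δx),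
        u₀ (x - a * n * Δt)| ≤ B := by
      rw [abs_mul, abs_of_pos (by positivity : (0:ℝ) < 1 / Δx)]
      calc (1 / Δx) * |∫ x in Set.Ioc ((j : ℝ) * Δx) (((j : ℝ) + 1) * Δx),
            u₀ (x - a * n * Δt)| ≤ (1 / Δx) * (B * Δx) := by
            apply mul_le_mul_of_nonneg_left _ (by positivity)
            exact hle
        _ = B := by field_simp
    calc ((1 / Δx) * ∫ x in Set.Ioc ((j : ℝ) * Δx) (((j : ℝ) + 1) * Δx),
          u₀ (x - a * n * Δt)) ^ 2
        = |(1 / Δx) * ∫ x in Set.Ioc ((j : ℝ) * Δx) (((j : ℝ) + 1) * Δx),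
          u₀ (x - a * n * Δt)| ^ 2 := (sq_abs _).symm
      _ ≤ B ^ 2 := pow_le_pow_left₀ (abs_nonneg _) habs 2
      _ = (r:ℝ) * Δx * K := Real.sq_sqrt (by positivity)
  -- the summand
  set F : ℕ → ℝ := fun n => ∑ j ∈ Finset.range r,
      Δt * ((1 / Δx) * ∫ x in Set.Ioc ((j : ℝ) * Δx) (((j : ℝ) + 1) * Δx),
        u₀ (x - a * n * Δt)) ^ 2 with hFdef
  have hFzero : ∀ n ∉ Finset.range N, F n = 0 := by
    intro n hn
    rw [Finset.mem_range, not_lt] at hn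
    have hn' : (r : ℝ) * τ ≤ (n : ℝ) :=
      le_trans (Nat.le_ceil _) (by exact_mod_cast hn)
    refine Finset.sum_eq_zero fun j hj => ?_
    rw [hvanish j (Finset.mem_range.mp hj) n hn']
    ring
  have htsum : ∑' n : ℕ, F n = ∑ n ∈ Finset.range N, F n := tsum_eq_sum hFzero
  rw [htsum]
  have hFle : ∀ n : ℕ, F n ≤ (r:ℝ) * (Δt * ((r:ℝ) * Δx * K)) := by
    intro n
    calc F n ≤ ∑ _j ∈ Finset.range r, Δt * ((r:ℝ) * Δx * K) := by
          refine Finset.sum_le_sum fun j hj => ?_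
          exact mul_le_mul_of_nonneg_left (hterm j (Finset.mem_range.mp hj) n) hΔt0.le
      _ = (r:ℝ) * (Δt * ((r:ℝ) * Δx * K)) := by
          rw [Finset.sum_const, Finset.card_range, nsmul_eq_mul]
  calc ∑ n ∈ Finset.range N, F n
      ≤ ∑ _n ∈ Finset.range N, (r:ℝ) * (Δt * ((r:ℝ) * Δx * K)) :=
        Finset.sum_le_sum fun n _ => hFle n
    _ = (N:ℝ) * ((r:ℝ) * (Δt * ((r:ℝ) * Δx * K))) := by
        rw [Finset.sum_const, Finset.card_range, nsmul_eq_mul]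
    _ = (N:ℝ) * (r:ℝ)^2 * τ * a * Δt^2 * K := by rw [hΔxdef]; ring
    _ ≤ ((N:ℝ) * (r:ℝ)^2 * τ * a + 1) * Δt ^ 2 * K := by nlinarith
end

section
/- Let u_0 ∈ H^1(ℝ⁺) with u_0(0) = 0, a < 0, and fix τ > 0 with Δx = τ|a|Δt. For j ∈ {0,…,r−1}, n ≥ 0, set η_{j,n} := (1/Δx)∫_{x_j}^{x_{j+1}} u_0(x + |a| t^n) dx − (1/Δt)∫_{t^n}^{t^{n+1}} u_0(|a| t) dt, where x_j = jΔx, t^n = nΔt. Then there is a constant C (independent of u_0 and Δt ∈ (0,1]) such that Σ_{n≥0} Σ_{j=0}^{r-1} Δt |η_{j,n}|^2 ≤ C Δt^2 ‖u_0'‖_{L²(ℝ⁺)}^2. -/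
open MeasureTheory Set

/-!
With `h = |a|Δt` and an integer `K ≥ max 1 (rτ)`, both averages in `η_{j,n}` are averages of `u₀`
over subintervals of the window `[nh, (n+K)h]`, so each differs from `u₀(nh)` by at most
`∫_window |u₀'|`. Cauchy–Schwarz then gives `η_{j,n}² ≤ 4Kh ∫_window u₀'²`, and since every cell
`[kh, (k+1)h]` lies in at most `K` windows, summing over `n` costs one more factor `K`.
-/

lemma sq_integral_abs_le_mul_integral_sq {g : ℝ → ℝ} {a b : ℝ} (hab : a ≤ b)
    (hg : MemLp g 2 (volume.restrict (Ioc a b))) :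
    (∫ x in a..b, |g x|) ^ 2 ≤ (b - a) * ∫ x in a..b, g x ^ 2 := by
  rcases hab.eq_or_lt with rfl | hab
  · simp
  have : IsFiniteMeasure (volume.restrict (Ioc a b)) :=
    isFiniteMeasure_restrict.mpr measure_Ioc_lt_top.ne
  have hjensen := (convexOn_pow 2).map_set_average_le (μ := volume) (t := Ioc a b)
    (continuousOn_pow 2) isClosed_Ici (by simp [hab]) measure_Ioc_lt_top.ne
    (Filter.Eventually.of_forall fun x => abs_nonneg (g x))
    (hg.norm.integrable one_le_two)
    (by simpa only [IntegrableOn, Function.comp_def, sq_abs] using hg.integrable_sq)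
  simp only [sq_abs, setAverage_eq, smul_eq_mul,
    Real.volume_real_Ioc_of_le hab.le, mul_pow, inv_pow] at hjensen
  rw [intervalIntegral.integral_of_le hab.le, intervalIntegral.integral_of_le hab.le]
  have hba : 0 < b - a := sub_pos.mpr hab
  have := mul_le_mul_of_nonneg_left hjensen (sq_nonneg (b - a))
  field_simp at this
  linarith

lemma abs_sub_le_integral_abs_of_hasDerivAt {u g : ℝ → ℝ} {β s γ : ℝ}
    (hd : ∀ x ∈ Icc β γ, HasDerivAt u (g x) x) (hg : IntervalIntegrable g volume β γ)
    (hβs : β ≤ s) (hsγ : s ≤ γ) :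
    |u s - u β| ≤ ∫ x in β..γ, |g x| := by
  have hsub : uIcc β s ⊆ Icc β γ := by
    rw [uIcc_of_le hβs]; exact Icc_subset_Icc_right hsγ
  rw [← intervalIntegral.integral_eq_sub_of_hasDerivAt (fun x hx => hd x (hsub hx))
    (hg.mono_set (by rwa [uIcc_of_le (hβs.trans hsγ)]))]
  calc |∫ x in β..s, g x| ≤ ∫ x in β..s, |g x| :=
        intervalIntegral.abs_integral_le_integral_abs hβs
    _ ≤ ∫ x in β..γ, |g x| :=
        intervalIntegral.integral_mono_interval le_rfl hβs hsγ
          (Filter.Eventually.of_forall fun x => abs_nonneg _) hg.abs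

lemma abs_one_div_mul_integral_sub_le {u : ℝ → ℝ} {α α' L c M : ℝ} (hL : 0 < L)
    (hαα' : α + L = α') (hu : IntervalIntegrable u volume α α')
    (hM : ∀ s ∈ Icc α α', |u s - c| ≤ M) :
    |1 / L * (∫ x in α..α', u x) - c| ≤ M := by
  have hdiff : 1 / L * (∫ x in α..α', u x) - c = 1 / L * ∫ x in α..α', (u x - c) := by
    rw [intervalIntegral.integral_sub hu intervalIntegrable_const, intervalIntegral.integral_const,
      smul_eq_mul, ← hαα']
    field_simp
    ring
  have hbound : ‖∫ x in α..α', (u x - c)‖ ≤ M * |α' - α| :=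
    intervalIntegral.norm_integral_le_of_norm_le_const fun x hx =>
      hM x (Ioc_subset_Icc_self (by rwa [uIoc_of_le (by linarith)] at hx))
  rw [hdiff, abs_mul, abs_of_pos (one_div_pos.mpr hL), one_div, inv_mul_le_iff₀ hL]
  rwa [Real.norm_eq_abs, show α' - α = L by linarith, abs_of_pos hL, mul_comm] at hbound

section WindowSums

variable {f : ℝ → ℝ} {h : ℝ}

lemma intervalIntegrable_of_integrableOn_Ioi (hf : IntegrableOn f (Ioi 0)) {p q : ℝ}
    (hp : 0 ≤ p) (hpq : p ≤ q) : IntervalIntegrable f volume p q :=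
  (intervalIntegrable_iff_integrableOn_Ioc_of_le hpq).mpr
    (hf.mono_set fun _ hx => hp.trans_lt hx.1)

lemma sum_integral_cells_le (hf0 : ∀ x, 0 ≤ f x) (hf : IntegrableOn f (Ioi 0)) (hh : 0 < h)
    (t : Finset ℕ) :
    ∑ k ∈ t, ∫ x in (k : ℝ) * h..((k + 1 : ℕ) : ℝ) * h, f x ≤ ∫ x in Ioi 0, f x := by
  obtain ⟨N, htN⟩ := t.exists_nat_subset_range
  have hcell : ∀ k : ℕ, IntervalIntegrable f volume (k * h) ((k + 1 : ℕ) * h) := fun k =>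
    intervalIntegrable_of_integrableOn_Ioi hf (by positivity)
      (mul_le_mul_of_nonneg_right (by simp) hh.le)
  calc ∑ k ∈ t, ∫ x in (k : ℝ) * h..((k + 1 : ℕ) : ℝ) * h, f x
      ≤ ∑ k ∈ Finset.range N, ∫ x in (k : ℝ) * h..((k + 1 : ℕ) : ℝ) * h, f x :=
        Finset.sum_le_sum_of_subset_of_nonneg htN fun k _ _ =>
          intervalIntegral.integral_nonneg (mul_le_mul_of_nonneg_right (by simp) hh.le)
            fun x _ => hf0 x
    _ = ∫ x in (0 : ℝ)..N * h, f x := by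
        rw [intervalIntegral.sum_integral_adjacent_intervals fun k _ => hcell k]
        simp
    _ ≤ ∫ x in Ioi 0, f x := by
        rw [intervalIntegral.integral_of_le (by positivity)]
        exact setIntegral_mono_set hf (Filter.Eventually.of_forall fun x => hf0 x)
          Ioc_subset_Ioi_self.eventuallyLE

lemma sum_integral_windows_le (hf0 : ∀ x, 0 ≤ f x) (hf : IntegrableOn f (Ioi 0)) (hh : 0 < h)
    (K : ℕ) (s : Finset ℕ) :
    ∑ n ∈ s, ∫ x in (n : ℝ) * h..((n + K : ℕ) : ℝ) * h, f x ≤ K * ∫ x in Ioi 0, f x := by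
  have hwindow : ∀ n : ℕ, ∫ x in (n : ℝ) * h..((n + K : ℕ) : ℝ) * h, f x =
      ∑ i ∈ Finset.range K,
        ∫ x in ((n + i : ℕ) : ℝ) * h..((n + i + 1 : ℕ) : ℝ) * h, f x := by
    intro n
    rw [← intervalIntegral.sum_integral_adjacent_intervals_Ico (a := fun k : ℕ => k * h)
      (by omega) fun k _ => intervalIntegrable_of_integrableOn_Ioi hf (by positivity)
        (mul_le_mul_of_nonneg_right (by simp) hh.le), Finset.sum_Ico_eq_sum_range]
    simp
  simp only [hwindow]
  rw [Finset.sum_comm]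
  calc ∑ i ∈ Finset.range K, ∑ n ∈ s,
        ∫ x in ((n + i : ℕ) : ℝ) * h..((n + i + 1 : ℕ) : ℝ) * h, f x
      ≤ ∑ i ∈ Finset.range K, ∫ x in Ioi 0, f x := Finset.sum_le_sum fun i _ => by
        simpa only [Finset.sum_map, addRightEmbedding_apply] using
          sum_integral_cells_le hf0 hf hh (s.map (addRightEmbedding i))
    _ = K * ∫ x in Ioi 0, f x := by simp

end WindowSums

/-- `η_{j,n}` for the mesh `Δx = τ|a|Δt`, `x_j = jΔx`, `tⁿ = nΔt`. -/
noncomputable def boundaryMismatch (u : ℝ → ℝ) (a τ Δt : ℝ) (j n : ℕ) : ℝ :=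
  (1 / (τ * |a| * Δt)) *
      (∫ x in ((j : ℝ) * (τ * |a| * Δt))..(((j : ℝ) + 1) * (τ * |a| * Δt)),
        u (x + |a| * (n * Δt)))
    - (1 / Δt) * ∫ t in ((n : ℝ) * Δt)..(((n : ℝ) + 1) * Δt), u (|a| * t)

lemma abs_boundaryMismatch_le {u g : ℝ → ℝ} {a τ Δt : ℝ} (ha : a ≠ 0) (hτ : 0 < τ)
    (hΔt : 0 < Δt) (hd : ∀ x, HasDerivAt u (g x) x) (hg : LocallyIntegrable g)
    {j n K : ℕ} (hjK : (j + 1) * τ ≤ K) (hK : 1 ≤ K) :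
    |boundaryMismatch u a τ Δt j n| ≤
      2 * ∫ x in (n : ℝ) * (|a| * Δt)..((n + K : ℕ) : ℝ) * (|a| * Δt), |g x| := by
  have hh : 0 < |a| * Δt := by positivity
  have hcont : Continuous u := continuous_iff_continuousAt.mpr fun x => (hd x).continuousAt
  have hpt : ∀ s ∈ Icc ((n : ℝ) * (|a| * Δt)) (((n + K : ℕ) : ℝ) * (|a| * Δt)),
      |u s - u (n * (|a| * Δt))| ≤
        ∫ x in (n : ℝ) * (|a| * Δt)..((n + K : ℕ) : ℝ) * (|a| * Δt), |g x| :=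
    fun s hs => abs_sub_le_integral_abs_of_hasDerivAt (fun x _ => hd x)
      (hg.integrableOn_isCompact isCompact_uIcc).intervalIntegrable hs.1 hs.2
  have hA := abs_one_div_mul_integral_sub_le (u := fun x => u (x + |a| * (n * Δt)))
    (c := u (n * (|a| * Δt))) (α := j * (τ * |a| * Δt)) (α' := (j + 1) * (τ * |a| * Δt))
    (L := τ * |a| * Δt) (by positivity) (by ring)
    (Continuous.intervalIntegrable (by fun_prop) _ _) fun s hs => hpt _ (by
      push_cast
      constructor <;> nlinarith [hs.1, hs.2, (by positivity : (0 : ℝ) ≤ j * (τ * |a| * Δt))])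
  have hB := abs_one_div_mul_integral_sub_le (u := fun t => u (|a| * t)) (c := u (n * (|a| * Δt)))
    (α := n * Δt) (α' := (n + 1) * Δt) (L := Δt) hΔt (by ring)
    (Continuous.intervalIntegrable (by fun_prop) _ _) fun t ht => hpt _ (by
      push_cast
      constructor <;>
        nlinarith [ht.1, ht.2, abs_pos.mpr ha, (by exact_mod_cast hK : (1 : ℝ) ≤ K)])
  calc |boundaryMismatch u a τ Δt j n|
      ≤ |_ - u (n * (|a| * Δt))| + |u (n * (|a| * Δt)) - _| := abs_sub_le _ _ _
    _ ≤ _ := by rw [abs_sub_comm (u _)]; linarith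

lemma boundaryMismatch_sq_le {u g : ℝ → ℝ} {a τ Δt : ℝ} (ha : a ≠ 0) (hτ : 0 < τ)
    (hΔt : 0 < Δt) (hd : ∀ x, HasDerivAt u (g x) x) (hg : MemLp g 2 volume)
    {j n K : ℕ} (hjK : (j + 1) * τ ≤ K) (hK : 1 ≤ K) :
    boundaryMismatch u a τ Δt j n ^ 2 ≤
      4 * (K * (|a| * Δt)) *
        ∫ x in (n : ℝ) * (|a| * Δt)..((n + K : ℕ) : ℝ) * (|a| * Δt), g x ^ 2 := by
  have hwindow : (n : ℝ) * (|a| * Δt) ≤ ((n + K : ℕ) : ℝ) * (|a| * Δt) :=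
    mul_le_mul_of_nonneg_right (by simp) (by positivity)
  have hCS := sq_integral_abs_le_mul_integral_sq hwindow (hg.restrict _)
  rw [show ((n + K : ℕ) : ℝ) * (|a| * Δt) - n * (|a| * Δt) = K * (|a| * Δt) by
    push_cast; ring] at hCS
  calc boundaryMismatch u a τ Δt j n ^ 2
      = |boundaryMismatch u a τ Δt j n| ^ 2 := (sq_abs _).symm
    _ ≤ (2 * ∫ x in (n : ℝ) * (|a| * Δt)..((n + K : ℕ) : ℝ) * (|a| * Δt), |g x|) ^ 2 :=
        pow_le_pow_left₀ (abs_nonneg _)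
          (abs_boundaryMismatch_le ha hτ hΔt hd (hg.locallyIntegrable one_le_two) hjK hK) 2
    _ ≤ _ := by linarith

/-- outgoing case boundary errors: for u₀ ∈ H¹(ℝ⁺) with u₀(0) = 0,
a < 0, Δx = τ|a|Δt, the mismatch η_{j,n} between the cell average of the exact
solution and the time average of its boundary trace satisfies
Σ_{n,j} Δt |η_{j,n}|² ≤ C Δt² ‖u₀'‖²_{L²(ℝ⁺)}. -/
theorem stmt14 (r : ℕ) (a τ : ℝ) (ha : a < 0) (hτ : 0 < τ) :
    ∃ C > 0, ∀ (u₀ g : ℝ → ℝ),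
      u₀ 0 = 0 →
      (∀ x : ℝ, HasDerivAt u₀ (g x) x) →
      MeasureTheory.MemLp g 2 MeasureTheory.volume →
      ∀ Δt : ℝ, Δt ∈ Set.Ioc (0 : ℝ) 1 →
        ∑' n : ℕ, ∑ j ∈ Finset.range r,
          Δt * ((1 / (τ * |a| * Δt)) *
              (∫ x in ((j : ℝ) * (τ * |a| * Δt))..(((j : ℝ) + 1) * (τ * |a| * Δt)),
                u₀ (x + |a| * (n * Δt)))
            - (1 / Δt) * ∫ t in ((n : ℝ) * Δt)..(((n : ℝ) + 1) * Δt), u₀ (|a| * t)) ^ 2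
          ≤ C * Δt ^ 2 * ∫ x in Set.Ioi (0 : ℝ), (g x) ^ 2 := by
  obtain ⟨K, hK, hrτK⟩ : ∃ K : ℕ, 1 ≤ K ∧ r * τ ≤ K :=
    ⟨⌈r * τ⌉₊ + 1, by omega, (Nat.le_ceil _).trans (by simp)⟩
  have ha0 : 0 < |a| := abs_pos.mpr ha.ne
  have hK0 : (0 : ℝ) < K := by exact_mod_cast hK
  refine ⟨4 * (r + 1) * K ^ 2 * |a|, by positivity, ?_⟩
  rintro u₀ g - hd hg Δt ⟨hΔt, -⟩
  refine tsum_le_of_sum_le' (by positivity) fun s => ?_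
  have hjK : ∀ j ∈ Finset.range r, ((j : ℝ) + 1) * τ ≤ K := fun j hj =>
    (mul_le_mul_of_nonneg_right (by exact_mod_cast Finset.mem_range.mp hj) hτ.le).trans hrτK
  calc ∑ n ∈ s, ∑ j ∈ Finset.range r, Δt * boundaryMismatch u₀ a τ Δt j n ^ 2
      ≤ ∑ n ∈ s, ∑ j ∈ Finset.range r, Δt * (4 * (K * (|a| * Δt)) *
          ∫ x in (n : ℝ) * (|a| * Δt)..((n + K : ℕ) : ℝ) * (|a| * Δt), g x ^ 2) :=
        Finset.sum_le_sum fun n _ => Finset.sum_le_sum fun j hj => mul_le_mul_of_nonneg_left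
          (boundaryMismatch_sq_le ha.ne hτ hΔt hd hg (hjK j hj) hK) hΔt.le
    _ = r * 4 * K * |a| * Δt ^ 2 *
          ∑ n ∈ s, ∫ x in (n : ℝ) * (|a| * Δt)..((n + K : ℕ) : ℝ) * (|a| * Δt), g x ^ 2 := by
        simp only [Finset.sum_const, Finset.card_range, nsmul_eq_mul, Finset.mul_sum]
        exact Finset.sum_congr rfl fun n _ => by ring
    _ ≤ r * 4 * K * |a| * Δt ^ 2 * (K * ∫ x in Ioi (0 : ℝ), g x ^ 2) :=
        mul_le_mul_of_nonneg_left (sum_integral_windows_le (fun x => sq_nonneg (g x))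
          hg.integrable_sq.integrableOn (by positivity) K s) (by positivity)
    _ = 4 * r * K ^ 2 * |a| * Δt ^ 2 * ∫ x in Ioi (0 : ℝ), g x ^ 2 := by ring
    _ ≤ 4 * (r + 1) * K ^ 2 * |a| * Δt ^ 2 * ∫ x in Ioi (0 : ℝ), g x ^ 2 := by
        gcongr; linarith
end

section
/- Let u_0 ∈ H²(ℝ⁺), a < 0, |a| = −a, and for n ≥ 0 define u^{tr}_n := (1/Δt)∫_{t^n}^{t^{n+1}} u_0(|a| t) dt with t^n = nΔt. Then for all integers n ≥ 0 and 0 ≤ σ, σ' ≤ k, |u^{tr}_{n+σ+σ'} − u^{tr}_{n+σ'} − u^{tr}_{n+σ} + u^{tr}_n|² ≤ C Δt³ ∫_0^{(2k+1)Δt} u_0''(|a| t^n + |a| s)² ds, where C depends only on a and k. -/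
/-!
Write `u t = u₀ (|a| t)`, `p = σ Δt`, `q = σ' Δt`. After a shift, the double difference of
the time averages is the average over `[tⁿ, tⁿ + Δt]` of the second difference
`u (x + p + q) - u (x + q) - u (x + p) + u x = ∫_x^{x+p} (u' (y + q) - u' y) dy`,
and Cauchy–Schwarz gives `(u' (y + q) - u' y)² ≤ q ∫ (u'')²`. Hence the square is at most
`p² q ∫ (u'')² ≤ k³ Δt³ a⁴ ∫ u₀''(|a| tⁿ + |a| s)² ds`.
-/

open MeasureTheory Set

theorem sq_integral_le_measureReal_mul_integral_sq {α : Type*} [MeasurableSpace α]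
    {μ : Measure α} [IsFiniteMeasure μ] {f : α → ℝ} (hf : MemLp f 2 μ) :
    (∫ x, f x ∂μ) ^ 2 ≤ μ.real univ * ∫ x, f x ^ 2 ∂μ := by
  rcases eq_zero_or_neZero μ with rfl | hμ
  · simp
  have hjensen := (even_two.convexOn_pow (𝕜 := ℝ)).map_average_le
    (continuous_pow 2).continuousOn isClosed_univ (by simp) (hf.integrable one_le_two)
    hf.integrable_sq
  have hm : 0 < μ.real univ := by
    simp [measureReal_def, ENNReal.toReal_pos_iff, measure_lt_top, hμ.out]
  simp only [average_eq, smul_eq_mul] at hjensen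
  rwa [mul_pow, inv_pow, inv_mul_le_iff₀ (by positivity), ← mul_assoc, sq (μ.real univ),
    mul_inv_cancel_right₀ hm.ne'] at hjensen

theorem sq_intervalIntegral_le_mul_integral_sq {f : ℝ → ℝ} {c d : ℝ} (hcd : c ≤ d)
    (hf : MemLp f 2 (volume.restrict (Ioc c d))) :
    (∫ x in c..d, f x) ^ 2 ≤ (d - c) * ∫ x in c..d, f x ^ 2 := by
  have : IsFiniteMeasure (volume.restrict (Ioc c d)) := by
    rw [isFiniteMeasure_restrict]; exact measure_Ioc_lt_top.ne
  simpa [intervalIntegral.integral_of_le hcd, hcd] using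
    sq_integral_le_measureReal_mul_integral_sq hf

theorem sq_sub_le_mul_integral_sq_deriv {v v' : ℝ → ℝ} (hv : ∀ x, HasDerivAt v (v' x) x)
    {c d : ℝ} (hcd : c ≤ d) (hv' : IntegrableOn (fun x => v' x ^ 2) (Ioc c d)) :
    (v d - v c) ^ 2 ≤ (d - c) * ∫ x in c..d, v' x ^ 2 := by
  have hmeas : Measurable v' := by
    rw [← funext fun x => (hv x).deriv]; exact measurable_deriv v
  have hL2 : MemLp v' 2 (volume.restrict (Ioc c d)) :=
    (memLp_two_iff_integrable_sq hmeas.aestronglyMeasurable).2 hv'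
  have : IsFiniteMeasure (volume.restrict (Ioc c d)) := by
    rw [isFiniteMeasure_restrict]; exact measure_Ioc_lt_top.ne
  have hint : IntervalIntegrable v' volume c d :=
    (intervalIntegrable_iff_integrableOn_Ioc_of_le hcd).2 (hL2.integrable one_le_two)
  rw [← intervalIntegral.integral_eq_sub_of_hasDerivAt (fun x _ => hv x) hint]
  exact sq_intervalIntegral_le_mul_integral_sq hcd hL2

theorem sq_intervalIntegral_le_of_sq_le {f : ℝ → ℝ} {c d M : ℝ} (hcd : c ≤ d)
    (hf : ∀ x ∈ Ioc c d, f x ^ 2 ≤ M) :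
    (∫ x in c..d, f x) ^ 2 ≤ (d - c) ^ 2 * M := by
  rcases hcd.eq_or_lt with rfl | hlt
  · simp
  have hM : 0 ≤ M := (sq_nonneg _).trans (hf d ⟨hlt, le_rfl⟩)
  have hbound := intervalIntegral.norm_integral_le_of_norm_le_const (C := √M) (f := f)
    (a := c) (b := d) fun x hx => Real.abs_le_sqrt (hf x (by rwa [uIoc_of_le hcd] at hx))
  rw [Real.norm_eq_abs, abs_of_nonneg (sub_nonneg.2 hcd), abs_le] at hbound
  calc (∫ x in c..d, f x) ^ 2 ≤ (√M * (d - c)) ^ 2 := sq_le_sq' hbound.1 hbound.2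
    _ = (d - c) ^ 2 * M := by rw [mul_pow, Real.sq_sqrt hM]; ring

theorem secondDiff_eq_integral_sub {u u' : ℝ → ℝ} (hu : ∀ x, HasDerivAt u (u' x) x)
    (hu' : Continuous u') (x p q : ℝ) :
    u (x + p + q) - u (x + q) - u (x + p) + u x = ∫ y in x..x + p, (u' (y + q) - u' y) := by
  have hderiv : ∀ y, HasDerivAt (fun y => u (y + q) - u y) (u' (y + q) - u' y) y :=
    fun y => ((hu (y + q)).comp_add_const y q).sub (hu y)
  rw [intervalIntegral.integral_eq_sub_of_hasDerivAt (fun y _ => hderiv y)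
    ((by fun_prop : Continuous fun y => u' (y + q) - u' y).intervalIntegrable _ _),
    add_right_comm]
  ring

theorem sq_secondDiff_le {u u' u'' : ℝ → ℝ} (hu : ∀ x, HasDerivAt u (u' x) x)
    (hu' : ∀ x, HasDerivAt u' (u'' x) x) {c e x p q : ℝ} (hp : 0 ≤ p) (hq : 0 ≤ q)
    (hcx : c ≤ x) (hxe : x + p + q ≤ e) (hu'' : IntegrableOn (fun y => u'' y ^ 2) (Ioc c e)) :
    (u (x + p + q) - u (x + q) - u (x + p) + u x) ^ 2
      ≤ p ^ 2 * (q * ∫ y in c..e, u'' y ^ 2) := by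
  have hu'_cont : Continuous u' :=
    Differentiable.continuous fun y => (hu' y).differentiableAt
  rw [secondDiff_eq_integral_sub hu hu'_cont]
  refine (sq_intervalIntegral_le_of_sq_le (le_add_of_nonneg_right hp) fun y hy => ?_).trans_eq
    (by rw [add_sub_cancel_left])
  have hcy : c ≤ y := hcx.trans hy.1.le
  have hye : y + q ≤ e := by linarith [hy.2]
  calc (u' (y + q) - u' y) ^ 2 ≤ q * ∫ z in y..y + q, u'' z ^ 2 := by
        simpa using sq_sub_le_mul_integral_sq_deriv hu' (le_add_of_nonneg_right hq)
          (hu''.mono_set (Ioc_subset_Ioc hcy hye))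
    _ ≤ q * ∫ z in c..e, u'' z ^ 2 := by
        gcongr
        exact intervalIntegral.integral_mono_interval hcy (le_add_of_nonneg_right hq) hye
          (Filter.Eventually.of_forall fun z => sq_nonneg _)
          ((intervalIntegrable_iff_integrableOn_Ioc_of_le (hcy.trans (by linarith))).2 hu'')

theorem sq_secondDiff_average_le {u u' u'' : ℝ → ℝ} (hu : ∀ x, HasDerivAt u (u' x) x)
    (hu' : ∀ x, HasDerivAt u' (u'' x) x) {s τ p q e : ℝ} (hτ : 0 < τ) (hp : 0 ≤ p)
    (hq : 0 ≤ q) (he : s + τ + p + q ≤ e)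
    (hu'' : IntegrableOn (fun y => u'' y ^ 2) (Ioc s e)) :
    ((1 / τ) * (∫ t in s + p + q..s + p + q + τ, u t)
        - (1 / τ) * (∫ t in s + q..s + q + τ, u t)
        - (1 / τ) * (∫ t in s + p..s + p + τ, u t) + (1 / τ) * ∫ t in s..s + τ, u t) ^ 2
      ≤ p ^ 2 * q * ∫ y in s..e, u'' y ^ 2 := by
  have hcont : Continuous u := Differentiable.continuous fun x => (hu x).differentiableAt
  have hshift (r : ℝ) : ∫ t in s + r..s + r + τ, u t = ∫ x in s..s + τ, u (x + r) := by
    rw [intervalIntegral.integral_comp_add_right, add_right_comm]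
  have hint (r : ℝ) : IntervalIntegrable (fun x => u (x + r)) volume s (s + τ) :=
    (hcont.comp (continuous_add_const r)).intervalIntegrable _ _
  have hcomb : (1 / τ) * (∫ t in s + p + q..s + p + q + τ, u t)
      - (1 / τ) * (∫ t in s + q..s + q + τ, u t) - (1 / τ) * (∫ t in s + p..s + p + τ, u t)
      + (1 / τ) * ∫ t in s..s + τ, u t
      = (1 / τ) * ∫ x in s..s + τ, (u (x + p + q) - u (x + q) - u (x + p) + u x) := by
    simp only [add_assoc _ p q]
    rw [hshift, hshift, hshift, intervalIntegral.integral_add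
      (((hint _).sub (hint _)).sub (hint _)) (hcont.intervalIntegrable _ _),
      intervalIntegral.integral_sub ((hint _).sub (hint _)) (hint _),
      intervalIntegral.integral_sub (hint _) (hint _)]
    ring
  have hbound := sq_intervalIntegral_le_of_sq_le (le_add_of_nonneg_right hτ.le) fun x hx =>
    sq_secondDiff_le hu hu' hp hq hx.1.le (by linarith [hx.2]) hu''
  rw [add_sub_cancel_left] at hbound
  rw [hcomb, mul_pow]
  calc _ ≤ (1 / τ) ^ 2 * (τ ^ 2 * (p ^ 2 * (q * ∫ y in s..e, u'' y ^ 2))) := by gcongr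
    _ = _ := by field_simp

theorem hasDerivAt_comp_const_mul {f f' : ℝ → ℝ} (hf : ∀ x, HasDerivAt f (f' x) x)
    (c t : ℝ) : HasDerivAt (fun t => f (c * t)) (c * f' (c * t)) t := by
  have := (hf (c * t)).comp t ((hasDerivAt_id t).const_mul c)
  rwa [mul_one, mul_comm] at this

theorem integral_sq_comp_mul_scaled (h : ℝ → ℝ) (c s T : ℝ) :
    ∫ y in s..s + T, (c * (c * h (c * y))) ^ 2
      = c ^ 4 * ∫ r in (0 : ℝ)..T, h (c * s + c * r) ^ 2 := by
  have hsq (y : ℝ) : (c * (c * h (c * y))) ^ 2 = c ^ 4 * h (c * y) ^ 2 := by ring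
  simp only [hsq, intervalIntegral.integral_const_mul, ← mul_add,
    intervalIntegral.integral_comp_add_left (fun x => h (c * x) ^ 2), add_zero]

/-- second-difference estimate for the time averages of the boundary
trace: |u^tr_{n+σ+σ'} - u^tr_{n+σ'} - u^tr_{n+σ} + u^tr_n|² is bounded by
C Δt³ ∫_0^{(2k+1)Δt} u₀''(|a|t^n + |a|s)² ds, with C depending only on a and k. -/
theorem stmt15 (a : ℝ) (ha : a < 0) (k : ℕ) (hk : 1 ≤ k) :
    ∃ C > 0, ∀ (u₀ g h : ℝ → ℝ),
      (∀ x : ℝ, HasDerivAt u₀ (g x) x) →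
      (∀ x : ℝ, HasDerivAt g (h x) x) →
      MeasureTheory.MemLp h 2 MeasureTheory.volume →
      ∀ Δt : ℝ, Δt ∈ Set.Ioc (0 : ℝ) 1 →
        ∀ n σ σ' : ℕ, σ ≤ k → σ' ≤ k →
          (((1 / Δt) * ∫ t in (((n + σ + σ' : ℕ) : ℝ) * Δt)..(((n + σ + σ' : ℕ) : ℝ) + 1) * Δt,
              u₀ (|a| * t))
            - ((1 / Δt) * ∫ t in (((n + σ' : ℕ) : ℝ) * Δt)..(((n + σ' : ℕ) : ℝ) + 1) * Δt,
              u₀ (|a| * t))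
            - ((1 / Δt) * ∫ t in (((n + σ : ℕ) : ℝ) * Δt)..(((n + σ : ℕ) : ℝ) + 1) * Δt,
              u₀ (|a| * t))
            + (1 / Δt) * ∫ t in ((n : ℝ) * Δt)..((n : ℝ) + 1) * Δt, u₀ (|a| * t)) ^ 2
          ≤ C * Δt ^ 3 *
            ∫ s in (0 : ℝ)..((2 * k + 1 : ℕ) : ℝ) * Δt, (h (|a| * ((n : ℝ) * Δt) + |a| * s)) ^ 2 := by
  have hA : 0 < |a| := abs_pos.2 ha.ne
  have hA4 : |a| ^ 4 = a ^ 4 := by rw [pow_abs, abs_of_nonneg (by positivity)]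
  have hk0 : (0 : ℝ) < k := by exact_mod_cast hk
  have ha4 : 0 < a ^ 4 := hA4 ▸ pow_pos hA 4
  refine ⟨k ^ 3 * a ^ 4, by positivity, ?_⟩
  rintro u₀ g h hg hh hh2 Δt ⟨hΔ, -⟩ n σ σ' hσ hσ'
  have hσk : (σ : ℝ) ≤ k := by exact_mod_cast hσ
  have hσ'k : (σ' : ℝ) ≤ k := by exact_mod_cast hσ'
  set A := |a|
  have hu := hasDerivAt_comp_const_mul hg A
  have hu' := fun t => (hasDerivAt_comp_const_mul hh A t).const_mul A
  have hint : IntegrableOn (fun y => (A * (A * h (A * y))) ^ 2)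
      (Ioc (n * Δt) (n * Δt + (2 * k + 1 : ℕ) * Δt)) := by
    simp only [fun y => show (A * (A * h (A * y))) ^ 2 = A ^ 4 * h (A * y) ^ 2 by ring]
    exact ((hh2.integrable_sq.comp_mul_left' hA.ne').const_mul _).integrableOn
  have key := sq_secondDiff_average_le hu hu' hΔ (by positivity : (0 : ℝ) ≤ σ * Δt)
    (by positivity : (0 : ℝ) ≤ σ' * Δt) (by push_cast; nlinarith) hint
  rw [integral_sq_comp_mul_scaled, hA4] at key
  set I := ∫ s in (0 : ℝ)..((2 * k + 1 : ℕ) : ℝ) * Δt, h (A * (n * Δt) + A * s) ^ 2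
  have hI : 0 ≤ I := intervalIntegral.integral_nonneg (by positivity) fun _ _ => sq_nonneg _
  refine le_trans (le_of_eq ?_) (key.trans ?_)
  · simp only [Nat.cast_add, add_mul, one_mul]
  calc _ = ((σ : ℝ) ^ 2 * σ') * (a ^ 4 * Δt ^ 3 * I) := by ring
    _ ≤ (k ^ 2 * k) * (a ^ 4 * Δt ^ 3 * I) := by gcongr
    _ = _ := by ring
end
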